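/- arXiv:2605.15457 — 3 statements merged into one kernel-verified Lean document; each statement's English description precedes it below -/
import Mathlib

section
/- Let A = (a,0), B = (b,0) with -1 < b < 0 < a < 1, let k > 0 with k ≠ 1, and let P = (x,y) lie in the open unit disk with P ≠ A and P ≠ B. Then sinh(d_H(A,P)) = k·sinh(d_H(B,P)) if and only if (x-a)²/(1-a²) - k²·(x-b)²/(1-b²) + (1-k²)·y² = 0, where d_H is the Beltrami–Klein hyperbolic distance. -/
/-!
Squaring turns the condition into `sinh² d_A = k² sinh² d_B`, and in the Klein model
`sinh² d((a,0), (x,y)) = ((x-a)²/(1-a²) + y²) / (1-x²-y²)`. The common factor `1/(1-x²-y²)`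
cancels, leaving the stated quadratic.
-/

open Real

theorem sinh_sq_eq_of_cosh_eq_div_sqrt {d u v : ℝ} (hv : 0 < v) (hd : cosh d = u / √v) :
    sinh d ^ 2 = (u ^ 2 - v) / v := by
  rw [sinh_sq, hd, div_pow, sq_sqrt hv.le, sub_div, div_self hv.ne']

theorem sinh_sq_of_cosh_eq_klein_axis {a x y d : ℝ} (ha : a ^ 2 < 1) (hP : x ^ 2 + y ^ 2 < 1)
    (hd : cosh d = (1 - a * x) / √((1 - a ^ 2) * (1 - (x ^ 2 + y ^ 2)))) :
    sinh d ^ 2 = ((x - a) ^ 2 / (1 - a ^ 2) + y ^ 2) / (1 - (x ^ 2 + y ^ 2)) := by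
  have ha' : 0 < 1 - a ^ 2 := by linarith
  have hP' : 0 < 1 - (x ^ 2 + y ^ 2) := by linarith
  rw [sinh_sq_eq_of_cosh_eq_div_sqrt (mul_pos ha' hP') hd]
  field_simp
  ring

theorem stmt5_general (a b k x y : ℝ)
    (hb : -1 < b) (hb0 : b < 0) (ha0 : 0 < a) (ha : a < 1)
    (hk : 0 < k)
    (hP : x ^ 2 + y ^ 2 < 1)
    (dA dB : ℝ) (hdA0 : 0 ≤ dA) (hdB0 : 0 ≤ dB)
    (hdA : Real.cosh dA =
      (1 - a * x) / Real.sqrt ((1 - a ^ 2) * (1 - (x ^ 2 + y ^ 2))))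
    (hdB : Real.cosh dB =
      (1 - b * x) / Real.sqrt ((1 - b ^ 2) * (1 - (x ^ 2 + y ^ 2)))) :
    Real.sinh dA = k * Real.sinh dB ↔
      (x - a) ^ 2 / (1 - a ^ 2) - k ^ 2 * ((x - b) ^ 2 / (1 - b ^ 2))
        + (1 - k ^ 2) * y ^ 2 = 0 := by
  have hP' : 1 - (x ^ 2 + y ^ 2) ≠ 0 := by linarith
  have hsinhA := sinh_sq_of_cosh_eq_klein_axis (by nlinarith) hP hdA
  have hsinhB := sinh_sq_of_cosh_eq_klein_axis (by nlinarith) hP hdB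
  rw [← sq_eq_sq₀ (sinh_nonneg_iff.mpr hdA0) (mul_nonneg hk.le (sinh_nonneg_iff.mpr hdB0)),
    mul_pow, hsinhA, hsinhB, mul_div_assoc', div_left_inj' hP', ← sub_eq_zero]
  convert Iff.rfl using 2
  ring

/-- Klein model: the generalized Apollonius condition sinh(d_H(A,P)) = k·sinh(d_H(B,P))
is equivalent to the quadratic equation. -/
theorem stmt5 (a b k x y : ℝ)
    (hb : -1 < b) (hb0 : b < 0) (ha0 : 0 < a) (ha : a < 1)
    (hk : 0 < k) (hk1 : k ≠ 1)
    (hP : x ^ 2 + y ^ 2 < 1)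
    (hPA : (x, y) ≠ (a, 0)) (hPB : (x, y) ≠ (b, 0))
    (dA dB : ℝ) (hdA0 : 0 ≤ dA) (hdB0 : 0 ≤ dB)
    (hdA : Real.cosh dA =
      (1 - a * x) / Real.sqrt ((1 - a ^ 2) * (1 - (x ^ 2 + y ^ 2))))
    (hdB : Real.cosh dB =
      (1 - b * x) / Real.sqrt ((1 - b ^ 2) * (1 - (x ^ 2 + y ^ 2)))) :
    Real.sinh dA = k * Real.sinh dB ↔
      (x - a) ^ 2 / (1 - a ^ 2) - k ^ 2 * ((x - b) ^ 2 / (1 - b ^ 2))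
        + (1 - k ^ 2) * y ^ 2 = 0 :=
  stmt5_general a b k x y hb hb0 ha0 ha hk hP dA dB hdA0 hdB0 hdA hdB
end

section
/- Let A = (a,0), B = (b,0) be points of the gnomonic model of the elliptic plane, let k > 0 with k ≠ 1, and let P = (x,y) ∈ ℝ² with P ≠ A, P ≠ B. Then sin(d_E(A,P)) = k·sin(d_E(B,P)) if and only if (x-a)²/(1+a²) - k²·(x-b)²/(1+b²) + (1-k²)·y² = 0. -/
/-!
Both sines are nonnegative on `[0, π/2]`, so the condition is equivalent to its square.
By `1 - cos² = sin²` and Lagrange's identity, `sin² d_E(A,P) = ((x-a)² + (1+a²)y²) / ((1+a²)(1+‖P‖²))`,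
and clearing the common factor `1 + ‖P‖²` turns the squared condition into the quadric.
-/

open Real

lemma sin_sq_of_cos_eq_gnomonic {a x y d : ℝ}
    (hd : cos d = (1 + a * x) / √((1 + a ^ 2) * (1 + (x ^ 2 + y ^ 2)))) :
    sin d ^ 2 = ((x - a) ^ 2 + (1 + a ^ 2) * y ^ 2) /
      ((1 + a ^ 2) * (1 + (x ^ 2 + y ^ 2))) := by
  have hD : 0 < (1 + a ^ 2) * (1 + (x ^ 2 + y ^ 2)) := by positivity
  rw [sin_sq, hd, div_pow, sq_sqrt hD.le]
  field_simp
  ring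

lemma sin_nonneg_of_mem_Icc_zero_pi_div_two {d : ℝ} (h0 : 0 ≤ d) (h1 : d ≤ π / 2) :
    0 ≤ sin d :=
  sin_nonneg_of_nonneg_of_le_pi h0 (h1.trans (by linarith [pi_pos]))

theorem stmt6_general (a b k x y : ℝ)
    (hk : 0 < k)
    (dA dB : ℝ) (hdA0 : 0 ≤ dA) (hdA1 : dA ≤ π / 2) (hdB0 : 0 ≤ dB) (hdB1 : dB ≤ π / 2)
    (hdA : Real.cos dA =
      (1 + a * x) / Real.sqrt ((1 + a ^ 2) * (1 + (x ^ 2 + y ^ 2))))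
    (hdB : Real.cos dB =
      (1 + b * x) / Real.sqrt ((1 + b ^ 2) * (1 + (x ^ 2 + y ^ 2)))) :
    Real.sin dA = k * Real.sin dB ↔
      (x - a) ^ 2 / (1 + a ^ 2) - k ^ 2 * ((x - b) ^ 2 / (1 + b ^ 2))
        + (1 - k ^ 2) * y ^ 2 = 0 := by
  have hsA := sin_nonneg_of_mem_Icc_zero_pi_div_two hdA0 hdA1
  have hsB := sin_nonneg_of_mem_Icc_zero_pi_div_two hdB0 hdB1
  have hS : (0 : ℝ) < 1 + (x ^ 2 + y ^ 2) := by positivity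
  have hdiff : sin dA ^ 2 - (k * sin dB) ^ 2 =
      ((x - a) ^ 2 / (1 + a ^ 2) - k ^ 2 * ((x - b) ^ 2 / (1 + b ^ 2))
        + (1 - k ^ 2) * y ^ 2) / (1 + (x ^ 2 + y ^ 2)) := by
    rw [mul_pow, sin_sq_of_cos_eq_gnomonic hdA, sin_sq_of_cos_eq_gnomonic hdB]
    field_simp
    ring
  rw [← sq_eq_sq₀ hsA (mul_nonneg hk.le hsB), ← sub_eq_zero, hdiff,
    div_eq_zero_iff, or_iff_left hS.ne']

/-- Gnomonic model: the generalized Apollonius condition sin(d_E(A,P)) = k·sin(d_E(B,P))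
is equivalent to the quadratic equation. -/
theorem stmt6 (a b k x y : ℝ)
    (hk : 0 < k) (hk1 : k ≠ 1)
    (hPA : (x, y) ≠ (a, 0)) (hPB : (x, y) ≠ (b, 0))
    (dA dB : ℝ) (hdA0 : 0 ≤ dA) (hdA1 : dA ≤ π / 2) (hdB0 : 0 ≤ dB) (hdB1 : dB ≤ π / 2)
    (hdA : Real.cos dA =
      (1 + a * x) / Real.sqrt ((1 + a ^ 2) * (1 + (x ^ 2 + y ^ 2))))
    (hdB : Real.cos dB =
      (1 + b * x) / Real.sqrt ((1 + b ^ 2) * (1 + (x ^ 2 + y ^ 2)))) :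
    Real.sin dA = k * Real.sin dB ↔
      (x - a) ^ 2 / (1 + a ^ 2) - k ^ 2 * ((x - b) ^ 2 / (1 + b ^ 2))
        + (1 - k ^ 2) * y ^ 2 = 0 :=
  stmt6_general a b k x y hk dA dB hdA0 hdA1 hdB0 hdB1 hdA hdB
end

section
/- Let d > 0, k > 0, k ≠ 1, a = k·sinh(d)/(1 + k·cosh(d)), b = -sinh(d)/(cosh(d) + k). Then the coefficient identity (a(1 - b²) - k²·b(1 - a²))/((1-k²)(1-a²)(1-b²)) = k·sinh(d)/(1 - k²) holds; consequently the generalized Apollonius curve equation x² - 2·[(a(1-b²) - k²b(1-a²))/((1-k²)(1-a²)(1-b²))]·x + y² = 0 is equivalent to x² - (2k·sinh(d)/(1-k²))·x + y² = 0. -/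
open Real

/-! With `c = cosh d`, `s = sinh d` and `Q = 1 + 2 k c + k²`, one has `1 - a² = Q / (1 + k c)²`,
`1 - b² = Q / (c + k)²` and `a (1 - b²) - k² b (1 - a²) = k s Q² / ((1 + k c)² (c + k)²)`, so the
numerator of the coefficient is `k s (1 - a²)(1 - b²)` and the factors `1 - a²`, `1 - b²` cancel.
They do not vanish because `a` and `b` are Klein coordinates of points of the open unit disc. -/

theorem apollonius_numerator_eq {K : Type*} [Field K] {c s k a b : K} (hcs : c ^ 2 - s ^ 2 = 1)
    (h₁ : 1 + k * c ≠ 0) (h₂ : c + k ≠ 0)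
    (ha : a = k * s / (1 + k * c)) (hb : b = -(s / (c + k))) :
    a * (1 - b ^ 2) - k ^ 2 * b * (1 - a ^ 2) = k * s * ((1 - a ^ 2) * (1 - b ^ 2)) := by
  subst ha hb
  field_simp
  linear_combination -(k ^ 2 * s * c + k ^ 3 * s * (1 + c ^ 2 - s ^ 2) + k ^ 4 * s * c) * hcs

theorem sq_mul_sinh_lt_sq_add_mul_cosh {p q : ℝ} (hp : 0 < p) (hq : 0 < q) (x : ℝ) :
    (q * sinh x) ^ 2 < (p + q * cosh x) ^ 2 := by
  have hQ : 0 < p ^ 2 + 2 * p * q * cosh x + q ^ 2 := by positivity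
  linear_combination hQ - q ^ 2 * cosh_sq_sub_sinh_sq x

theorem sq_div_add_mul_cosh_lt_one {p q : ℝ} (hp : 0 < p) (hq : 0 < q) (x : ℝ) :
    (q * sinh x / (p + q * cosh x)) ^ 2 < 1 := by
  rw [div_pow, div_lt_one (by positivity)]
  exact sq_mul_sinh_lt_sq_add_mul_cosh hp hq x

theorem stmt8_general (d k : ℝ) (hk : 0 < k)
    (a b : ℝ)
    (ha : a = k * Real.sinh d / (1 + k * Real.cosh d))
    (hb : b = -(Real.sinh d / (Real.cosh d + k))) :
    (a * (1 - b ^ 2) - k ^ 2 * b * (1 - a ^ 2)) /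
        ((1 - k ^ 2) * (1 - a ^ 2) * (1 - b ^ 2)) = k * Real.sinh d / (1 - k ^ 2) ∧
    ∀ x y : ℝ,
      (x ^ 2 - 2 * ((a * (1 - b ^ 2) - k ^ 2 * b * (1 - a ^ 2)) /
          ((1 - k ^ 2) * (1 - a ^ 2) * (1 - b ^ 2))) * x + y ^ 2 = 0 ↔
       x ^ 2 - 2 * k * Real.sinh d / (1 - k ^ 2) * x + y ^ 2 = 0) := by
  have ha₁ : a ^ 2 < 1 := ha ▸ sq_div_add_mul_cosh_lt_one one_pos hk d
  have hb₁ : b ^ 2 < 1 := by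
    simpa [hb, add_comm k] using sq_div_add_mul_cosh_lt_one hk one_pos d
  have hnum := apollonius_numerator_eq (cosh_sq_sub_sinh_sq d) (by positivity) (by positivity)
    ha hb
  have hcoeff : (a * (1 - b ^ 2) - k ^ 2 * b * (1 - a ^ 2)) /
      ((1 - k ^ 2) * (1 - a ^ 2) * (1 - b ^ 2)) = k * sinh d / (1 - k ^ 2) := by
    rw [hnum, mul_assoc (1 - k ^ 2),
      mul_div_mul_right _ _ (mul_ne_zero (by linarith) (by linarith))]
  refine ⟨hcoeff, fun x y => ?_⟩
  rw [hcoeff, mul_div_assoc', ← mul_assoc]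

/-- Hyperbolic coefficient identity and the resulting equivalence of the two forms
of the generalized Apollonius curve equation. -/
theorem stmt8 (d k : ℝ) (hd : 0 < d) (hk : 0 < k) (hk1 : k ≠ 1)
    (a b : ℝ)
    (ha : a = k * Real.sinh d / (1 + k * Real.cosh d))
    (hb : b = -(Real.sinh d / (Real.cosh d + k))) :
    (a * (1 - b ^ 2) - k ^ 2 * b * (1 - a ^ 2)) /
        ((1 - k ^ 2) * (1 - a ^ 2) * (1 - b ^ 2)) = k * Real.sinh d / (1 - k ^ 2) ∧
    ∀ x y : ℝ,
      (x ^ 2 - 2 * ((a * (1 - b ^ 2) - k ^ 2 * b * (1 - a ^ 2)) /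
          ((1 - k ^ 2) * (1 - a ^ 2) * (1 - b ^ 2))) * x + y ^ 2 = 0 ↔
       x ^ 2 - 2 * k * Real.sinh d / (1 - k ^ 2) * x + y ^ 2 = 0) :=
  stmt8_general d k hk a b ha hb
end
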